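/- For every d ≥ 1, the mutual-visibility number of the hypercube satisfies μ(Q_d) ≥ C(d, ⌊d/2⌋) + C(d, ⌊d/2⌋ + 3), where C(n,k) denotes the binomial coefficient. -/

import Mathlib

open SimpleGraph

/-- Two vertices are `X`-visible in `G`: some shortest path between them has
no internal vertex in `X`. -/
def IsVisiblePair {V : Type*} (G : SimpleGraph V) (X : Set V) (x y : V) : Prop :=
  ∃ p : G.Walk x y, p.IsPath ∧ p.length = G.dist x y ∧
    ∀ z ∈ p.support, z ∈ X → z = x ∨ z = y

/-- `X` is a mutual-visibility set of `G`. -/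
def MutualVisSet {V : Type*} (G : SimpleGraph V) (X : Set V) : Prop :=
  ∀ x ∈ X, ∀ y ∈ X, IsVisiblePair G X x y

/-- `X` is a total mutual-visibility set of `G`. -/
def TotalMutualVisSet {V : Type*} (G : SimpleGraph V) (X : Set V) : Prop :=
  ∀ x y : V, IsVisiblePair G X x y

/-- The mutual-visibility number `μ(G)`. -/
noncomputable def mutualVisNum {V : Type*} (G : SimpleGraph V) : ℕ :=
  sSup {n | ∃ X : Set V, MutualVisSet G X ∧ X.ncard = n}

/-- The total mutual-visibility number `μₜ(G)`. -/
noncomputable def totalMutualVisNum {V : Type*} (G : SimpleGraph V) : ℕ :=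
  sSup {n | ∃ X : Set V, TotalMutualVisSet G X ∧ X.ncard = n}

/-- A set of vertices is convex: every shortest path in `G` between two of its
vertices has all its vertices in the set. -/
def ConvexSet {V : Type*} (G : SimpleGraph V) (S : Set V) : Prop :=
  ∀ x ∈ S, ∀ y ∈ S, ∀ p : G.Walk x y, p.IsPath → p.length = G.dist x y →
    ∀ z ∈ p.support, z ∈ S

/-- The hypercube `Q_d`: vertices are `{0,1}^d`, adjacency is Hamming distance 1. -/
def Qube (d : ℕ) : SimpleGraph (Fin d → Bool) :=
  SimpleGraph.fromRel (fun x y => hammingDist x y = 1)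

/-!
Take `X` to be the union of the weight levels `w` and `w + 3` of `Q_d`. Any two vertices of `X`
are joined by a geodesic whose interior lies on levels `w + 1` and `w + 2`: flip the differing
coordinates one at a time, upwards while on level `≤ w + 1` and downwards while on level
`≥ w + 2`; the weights force a step in the other direction only as the very last step. So `X` is a
mutual-visibility set, of size `C(d, w) + C(d, w + 3)`; take `w = ⌊d/2⌋`.
-/

open Finset Function

theorem le_mutualVisNum {V : Type*} [Finite V] {G : SimpleGraph V} {X : Set V}
    (hX : MutualVisSet G X) : X.ncard ≤ mutualVisNum G := by
  refine le_csSup ⟨Nat.card V, ?_⟩ ⟨X, hX, rfl⟩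
  rintro n ⟨Y, -, rfl⟩
  exact Set.ncard_le_card Y

section Hamming

variable {ι : Type*} [Fintype ι] [DecidableEq ι] {β : ι → Type*} [∀ i, DecidableEq (β i)]

theorem hammingDist_update_self {x : ∀ i, β i} {i : ι} {b : β i} (h : x i ≠ b) :
    hammingDist x (update x i b) = 1 := by
  rw [hammingDist, card_eq_one]
  refine ⟨i, ?_⟩
  ext j
  rcases eq_or_ne j i with rfl | hj <;> simp_all

theorem hammingDist_update_add_one {x y : ∀ i, β i} {i : ι} (h : x i ≠ y i) :
    hammingDist (update x i (y i)) y + 1 = hammingDist x y := by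
  have hfilter : univ.filter (fun j => x j ≠ y j) =
      insert i (univ.filter fun j => update x i (y i) j ≠ y j) := by
    ext j
    rcases eq_or_ne j i with rfl | hj <;> simp_all
  rw [hammingDist, hammingDist, hfilter, card_insert_of_notMem (by simp)]

end Hamming

section Weight

variable {ι : Type*} [Fintype ι]

def weight (v : ι → Bool) : ℕ := #{i | v i = true}

theorem weight_add_hammingDist_of_le {u v : ι → Bool} (h : u ≤ v) :
    weight u + hammingDist v u = weight v := by
  classical
  rw [weight, weight, hammingDist, ← card_union_of_disjoint]
  · congr 1
    ext i
    have hi := h i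
    cases hu : u i <;> cases hv : v i <;> simp_all [Bool.le_iff_imp]
  · rw [disjoint_filter]
    intro i _ hu hv
    have hi := h i
    simp_all [Bool.le_iff_imp]

theorem card_filter_weight_eq [DecidableEq ι] (k : ℕ) :
    #{v : ι → Bool | weight v = k} = (Fintype.card ι).choose k := by
  rw [← card_univ, ← card_powersetCard]
  refine card_nbij' (fun v => ({i | v i = true} : Finset ι)) (fun s i => decide (i ∈ s))
    ?_ ?_ ?_ ?_
  · intro v hv
    simp only [mem_coe, mem_filter, mem_univ, true_and, mem_powersetCard, subset_univ] at hv ⊢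
    exact hv
  · intro s hs
    simp only [mem_coe, mem_filter, mem_univ, true_and, mem_powersetCard, subset_univ] at hs ⊢
    simpa [weight] using hs
  · intro v _
    ext i
    simp
  · intro s _
    ext i
    simp

theorem ncard_weight_eq_or_eq [DecidableEq ι] {k l : ℕ} (hkl : k ≠ l) :
    {v : ι → Bool | weight v = k ∨ weight v = l}.ncard =
      (Fintype.card ι).choose k + (Fintype.card ι).choose l := by
  rw [← card_filter_weight_eq, ← card_filter_weight_eq, ← card_union_of_disjoint
    (disjoint_filter.2 fun v _ hk hl => hkl (hk.symm.trans hl)), ← filter_or,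
    Set.ncard_eq_toFinset_card', Set.toFinset_ofPred]

end Weight

namespace Qube

variable {d : ℕ} {x y : Fin d → Bool}

theorem adj_iff {u v : Fin d → Bool} : (Qube d).Adj u v ↔ hammingDist u v = 1 := by
  rw [Qube, fromRel_adj]
  constructor
  · rintro ⟨-, h | h⟩
    · exact h
    · rwa [hammingDist_comm]
  · intro h
    exact ⟨fun he => by simp [he] at h, Or.inl h⟩

theorem hammingDist_le_length (p : (Qube d).Walk x y) : hammingDist x y ≤ p.length := by
  induction p with
  | nil => simp
  | cons h p ih =>
    rw [Walk.length_cons]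
    exact (hammingDist_triangle _ _ _).trans (by rw [adj_iff.1 h]; omega)

theorem length_eq_dist_of_length_eq_hammingDist (p : (Qube d).Walk x y)
    (hp : p.length = hammingDist x y) : p.length = (Qube d).dist x y := by
  obtain ⟨q, hq⟩ := p.reachable.exists_walk_length_eq_dist
  have := hammingDist_le_length q
  have := dist_le p
  omega

theorem adj_update_of_ne {i : Fin d} (h : x i ≠ y i) :
    (Qube d).Adj x (update x i (y i)) ∧ hammingDist (update x i (y i)) y + 1 = hammingDist x y :=
  ⟨adj_iff.2 (hammingDist_update_self h), hammingDist_update_add_one h⟩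

theorem exists_adj_weight_succ (h : ¬ y ≤ x) :
    ∃ x', (Qube d).Adj x x' ∧ hammingDist x' y + 1 = hammingDist x y ∧
      weight x' = weight x + 1 := by
  obtain ⟨i, hi⟩ : ∃ i, x i < y i := by simpa [Pi.le_def] using h
  obtain ⟨hadj, hcloser⟩ := adj_update_of_ne hi.ne
  refine ⟨_, hadj, hcloser, ?_⟩
  rw [← weight_add_hammingDist_of_le (le_update_self_iff.2 hi.le), hammingDist_comm,
    hammingDist_update_self hi.ne]

theorem exists_adj_weight_pred (h : ¬ x ≤ y) :
    ∃ x', (Qube d).Adj x x' ∧ hammingDist x' y + 1 = hammingDist x y ∧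
      weight x' + 1 = weight x := by
  obtain ⟨i, hi⟩ : ∃ i, y i < x i := by simpa [Pi.le_def] using h
  obtain ⟨hadj, hcloser⟩ := adj_update_of_ne hi.ne'
  refine ⟨_, hadj, hcloser, ?_⟩
  rw [← weight_add_hammingDist_of_le (update_le_self_iff.2 hi.le),
    hammingDist_update_self hi.ne']

theorem exists_adj_toward_of_weight_mem_Icc {w : ℕ} (hx : weight x ∈ Set.Icc w (w + 3))
    (hy : weight y ∈ Set.Icc w (w + 3)) (hxy : x ≠ y) :
    ∃ x', (Qube d).Adj x x' ∧ hammingDist x' y + 1 = hammingDist x y ∧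
      (x' = y ∨ weight x' ∈ Set.Ioo w (w + 3)) := by
  obtain ⟨hx₁, hx₂⟩ := hx
  obtain ⟨hy₁, hy₂⟩ := hy
  have hpos := hammingDist_pos.2 hxy
  rcases le_or_gt (weight x) (w + 1) with hlow | hhigh
  · by_cases hyx : y ≤ x
    · obtain ⟨x', hadj, hcloser, -⟩ := exists_adj_weight_pred fun h => hxy (le_antisymm h hyx)
      have := weight_add_hammingDist_of_le hyx
      exact ⟨x', hadj, hcloser, Or.inl (hammingDist_eq_zero.1 (by omega))⟩
    · obtain ⟨x', hadj, hcloser, hw⟩ := exists_adj_weight_succ hyx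
      exact ⟨x', hadj, hcloser, Or.inr ⟨by omega, by omega⟩⟩
  · by_cases hxy' : x ≤ y
    · obtain ⟨x', hadj, hcloser, -⟩ := exists_adj_weight_succ fun h => hxy (le_antisymm hxy' h)
      have := weight_add_hammingDist_of_le hxy'
      rw [hammingDist_comm] at this
      exact ⟨x', hadj, hcloser, Or.inl (hammingDist_eq_zero.1 (by omega))⟩
    · obtain ⟨x', hadj, hcloser, hw⟩ := exists_adj_weight_pred hxy'
      exact ⟨x', hadj, hcloser, Or.inr ⟨by omega, by omega⟩⟩

theorem exists_walk_hammingDist_of_weight_mem_Icc {w : ℕ} (hx : weight x ∈ Set.Icc w (w + 3))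
    (hy : weight y ∈ Set.Icc w (w + 3)) :
    ∃ p : (Qube d).Walk x y, p.length = hammingDist x y ∧
      ∀ z ∈ p.support, z = x ∨ z = y ∨ weight z ∈ Set.Ioo w (w + 3) := by
  induction hn : hammingDist x y generalizing x with
  | zero =>
    obtain rfl := hammingDist_eq_zero.1 hn
    exact ⟨.nil, rfl, by simp⟩
  | succ n ih =>
    obtain ⟨x', hadj, hcloser, hx'⟩ :=
      exists_adj_toward_of_weight_mem_Icc hx hy (hammingDist_ne_zero.1 (by omega))
    have hx'Icc : weight x' ∈ Set.Icc w (w + 3) := by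
      rcases hx' with rfl | h
      · exact hy
      · exact Set.Ioo_subset_Icc_self h
    obtain ⟨p, hp, hsupp⟩ := ih hx'Icc (by omega)
    refine ⟨.cons hadj p, by rw [Walk.length_cons, hp], ?_⟩
    intro z hz
    rw [Walk.support_cons, List.mem_cons] at hz
    rcases hz with rfl | hz
    · exact Or.inl rfl
    · rcases hsupp z hz with rfl | h
      · exact Or.inr hx'
      · exact Or.inr h

theorem mutualVisSet_weight_eq_or_eq_add_three (w : ℕ) :
    MutualVisSet (Qube d) {v | weight v = w ∨ weight v = w + 3} := by
  have hIcc : ∀ v : Fin d → Bool, weight v = w ∨ weight v = w + 3 →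
      weight v ∈ Set.Icc w (w + 3) := by
    rintro v (h | h) <;> constructor <;> omega
  intro x hx y hy
  obtain ⟨p, hp, hsupp⟩ := exists_walk_hammingDist_of_weight_mem_Icc (hIcc x hx) (hIcc y hy)
  have hdist := length_eq_dist_of_length_eq_hammingDist p hp
  refine ⟨p, p.isPath_of_length_eq_dist hdist, hdist, fun z hz hzX => ?_⟩
  rcases hsupp z hz with h | h | ⟨h₁, h₂⟩
  · exact Or.inl h
  · exact Or.inr h
  · rcases hzX with h | h <;> omega

end Qube

theorem mu_Qube_lower_bound_general (d : ℕ) :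
    Nat.choose d (d / 2) + Nat.choose d (d / 2 + 3) ≤ mutualVisNum (Qube d) := by
  have hcard := ncard_weight_eq_or_eq (ι := Fin d) (k := d / 2) (l := d / 2 + 3) (by omega)
  rw [Fintype.card_fin] at hcard
  exact hcard ▸ le_mutualVisNum (Qube.mutualVisSet_weight_eq_or_eq_add_three (d / 2))

/-- `μ(Q_d) ≥ C(d, ⌊d/2⌋) + C(d, ⌊d/2⌋ + 3)` for every `d ≥ 1`. -/
theorem mu_Qube_lower_bound (d : ℕ) (hd : 1 ≤ d) :
    Nat.choose d (d / 2) + Nat.choose d (d / 2 + 3) ≤ mutualVisNum (Qube d) :=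
  mu_Qube_lower_bound_general d
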